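/- Let F = A + BK be Schur stable with FᵀP*F + I = P* (P* symmetric positive definite), and suppose a sequence z(t) ∈ ℝ^n satisfies z(t+1) = F·z(t) + G(t) with ‖G(t)‖ ≤ g for all t. Then ‖z(t)‖² ≤ (λ_max(P*)/λ_min(P*))·λ^{t−t₀}·‖z(t₀)‖² + (β/λ_min(P*))·g²·Σ_{l=0}^{t−t₀−1} λ^l, where λ = 1 − 1/(2λ_max(P*)) and β = ‖P*‖ + 2‖P*F‖². -/

import Mathlib

open Matrix
open scoped RealInnerProductSpace

noncomputable def enormE {ι : Type*} [Fintype ι] (v : ι → ℝ) : ℝ :=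
  ‖(WithLp.equiv 2 (ι → ℝ)).symm v‖

noncomputable def sn {m n : Type*} [Fintype m] [Fintype n] [DecidableEq n]
    (A : Matrix m n ℝ) : ℝ :=
  ‖LinearMap.toContinuousLinearMap (Matrix.toEuclideanLin A)‖

def SchurStable {n : ℕ} (F : Matrix (Fin n) (Fin n) ℝ) : Prop :=
  ∀ μ ∈ spectrum ℂ (F.map (algebraMap ℝ ℂ)), ‖μ‖ < 1

lemma enorm_sq_eq {n : ℕ} (v : Fin n → ℝ) : enormE v ^ 2 = v ⬝ᵥ v := by
  have h := real_inner_self_eq_norm_sq ((WithLp.equiv 2 (Fin n → ℝ)).symm v)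
  rw [enormE, ← h, PiLp.inner_apply]
  simp [dotProduct, sq]

lemma enorm_nonneg' {n : ℕ} (v : Fin n → ℝ) : 0 ≤ enormE v := norm_nonneg _

lemma dp_le {n : ℕ} (v w : Fin n → ℝ) : v ⬝ᵥ w ≤ enormE v * enormE w := by
  have h := real_inner_le_norm ((WithLp.equiv 2 (Fin n → ℝ)).symm v)
    ((WithLp.equiv 2 (Fin n → ℝ)).symm w)
  rw [PiLp.inner_apply] at h
  simpa [enormE, dotProduct, mul_comm] using h

lemma enorm_mulVec_le {n m : ℕ} (M : Matrix (Fin m) (Fin n) ℝ) (v : Fin n → ℝ) :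
    enormE (M *ᵥ v) ≤ sn M * enormE v := by
  have h := (LinearMap.toContinuousLinearMap (Matrix.toEuclideanLin M)).le_opNorm
    ((WithLp.equiv 2 (Fin n → ℝ)).symm v)
  simpa [sn, enormE, Matrix.toEuclideanLin_toLp] using h

lemma dp_shift {n m : ℕ} (M : Matrix (Fin m) (Fin n) ℝ) (a : Fin n → ℝ) (b : Fin m → ℝ) :
    (M *ᵥ a) ⬝ᵥ b = a ⬝ᵥ (Mᵀ *ᵥ b) := by
  rw [dotProduct_comm, dotProduct_mulVec, ← mulVec_transpose, dotProduct_comm]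

lemma quad_repr {n : ℕ} {P : Matrix (Fin n) (Fin n) ℝ} (hP : P.IsHermitian) (v : Fin n → ℝ) :
    v ⬝ᵥ (P *ᵥ v) = ∑ i, hP.eigenvalues i *
      ⟪(WithLp.equiv 2 (Fin n → ℝ)).symm v, hP.eigenvectorBasis i⟫ ^ 2 := by
  set x : EuclideanSpace ℝ (Fin n) := (WithLp.equiv 2 (Fin n → ℝ)).symm v with hx
  have h1 : v ⬝ᵥ (P *ᵥ v) = ⟪x, Matrix.toEuclideanLin P x⟫ := by
    rw [PiLp.inner_apply]
    simp [dotProduct, Matrix.toEuclideanLin_apply]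
    exact Finset.sum_congr rfl fun i _ => mul_comm _ _
  rw [h1, ← OrthonormalBasis.sum_inner_mul_inner hP.eigenvectorBasis x (Matrix.toEuclideanLin P x)]
  refine Finset.sum_congr rfl fun i _ => ?_
  have hsym := (Matrix.isHermitian_iff_isSymmetric.1 hP) (hP.eigenvectorBasis i) x
  rw [← hsym]
  have hev : Matrix.toEuclideanLin P (hP.eigenvectorBasis i)
      = hP.eigenvalues i • (hP.eigenvectorBasis i) := by
    rw [Matrix.toEuclideanLin_apply,
      show (hP.eigenvectorBasis i).ofLp = ⇑(hP.eigenvectorBasis i) from rfl,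
      hP.mulVec_eigenvectorBasis i]
    rfl
  rw [hev, real_inner_smul_left, real_inner_comm (hP.eigenvectorBasis i) x]
  ring

lemma norm_sq_repr {n : ℕ} {P : Matrix (Fin n) (Fin n) ℝ} (hP : P.IsHermitian) (v : Fin n → ℝ) :
    v ⬝ᵥ v = ∑ i, ⟪(WithLp.equiv 2 (Fin n → ℝ)).symm v, hP.eigenvectorBasis i⟫ ^ 2 := by
  set x : EuclideanSpace ℝ (Fin n) := (WithLp.equiv 2 (Fin n → ℝ)).symm v
  have h := OrthonormalBasis.sum_inner_mul_inner hP.eigenvectorBasis x x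
  rw [← enorm_sq_eq, enormE, ← real_inner_self_eq_norm_sq, ← h]
  refine Finset.sum_congr rfl fun i _ => ?_
  rw [real_inner_comm x, sq]

lemma quad_upper {n : ℕ} {P : Matrix (Fin n) (Fin n) ℝ} (hP : P.IsHermitian) {c : ℝ}
    (hc : ∀ i, hP.eigenvalues i ≤ c) (v : Fin n → ℝ) :
    v ⬝ᵥ (P *ᵥ v) ≤ c * (v ⬝ᵥ v) := by
  rw [quad_repr hP, norm_sq_repr hP, Finset.mul_sum]
  exact Finset.sum_le_sum fun i _ =>
    mul_le_mul_of_nonneg_right (hc i) (sq_nonneg _)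

lemma quad_lower {n : ℕ} {P : Matrix (Fin n) (Fin n) ℝ} (hP : P.IsHermitian) {c : ℝ}
    (hc : ∀ i, c ≤ hP.eigenvalues i) (v : Fin n → ℝ) :
    c * (v ⬝ᵥ v) ≤ v ⬝ᵥ (P *ᵥ v) := by
  rw [quad_repr hP, norm_sq_repr hP, Finset.mul_sum]
  exact Finset.sum_le_sum fun i _ =>
    mul_le_mul_of_nonneg_right (hc i) (sq_nonneg _)

set_option maxHeartbeats 2000000 in
theorem stmt13 {n p : ℕ} (A : Matrix (Fin n) (Fin n) ℝ) (B : Matrix (Fin n) (Fin p) ℝ)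
    (K : Matrix (Fin p) (Fin n) ℝ) (P : Matrix (Fin n) (Fin n) ℝ)
    (hF : SchurStable (A + B * K)) (hP : P.PosDef)
    (heq : (A + B * K)ᵀ * P * (A + B * K) + 1 = P)
    (lmax lmin : ℝ)
    (hlmax : IsGreatest (Set.range hP.1.eigenvalues) lmax)
    (hlmin : IsLeast (Set.range hP.1.eigenvalues) lmin)
    (z G : ℕ → (Fin n → ℝ)) (g : ℝ)
    (hz : ∀ t, z (t + 1) = (A + B * K).mulVec (z t) + G t)
    (hG : ∀ t, enormE (G t) ≤ g) (t0 : ℕ) :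
    ∀ t, t0 ≤ t →
      (enormE (z t)) ^ 2
        ≤ (lmax / lmin) * (1 - 1 / (2 * lmax)) ^ (t - t0) * (enormE (z t0)) ^ 2
          + ((sn P + 2 * (sn (P * (A + B * K))) ^ 2) / lmin) * g ^ 2
            * ∑ l ∈ Finset.range (t - t0), (1 - 1 / (2 * lmax)) ^ l := by
  intro t ht
  set F := A + B * K with hFdef
  obtain ⟨imax, himax⟩ := hlmax.1
  obtain ⟨imin, himin⟩ := hlmin.1
  have hlmaxpos : 0 < lmax := himax ▸ hP.eigenvalues_pos imax
  have hlminpos : 0 < lmin := himin ▸ hP.eigenvalues_pos imin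
  have hg0 : 0 ≤ g := (enorm_nonneg' (G 0)).trans (hG 0)
  have hsP : 0 ≤ sn P := norm_nonneg _
  have hsPF : 0 ≤ sn (P * F) := norm_nonneg _
  set β : ℝ := sn P + 2 * (sn (P * F)) ^ 2 with hβdef
  have hβ0 : 0 ≤ β := by positivity
  set lam : ℝ := 1 - 1 / (2 * lmax) with hlamdef
  clear_value β lam
  clear_value F
  clear hF
  have hub : ∀ v : Fin n → ℝ, v ⬝ᵥ (P *ᵥ v) ≤ lmax * (v ⬝ᵥ v) :=
    quad_upper hP.1 (fun i => hlmax.2 ⟨i, rfl⟩)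
  have hlb : ∀ v : Fin n → ℝ, lmin * (v ⬝ᵥ v) ≤ v ⬝ᵥ (P *ᵥ v) :=
    quad_lower hP.1 (fun i => hlmin.2 ⟨i, rfl⟩)
  have hPt : Pᵀ = P := by
    have h := hP.1
    rwa [Matrix.IsHermitian, Matrix.conjTranspose_eq_transpose_of_trivial] at h
  have hdecomp : ∀ v : Fin n → ℝ,
      v ⬝ᵥ (P *ᵥ v) = (F *ᵥ v) ⬝ᵥ (P *ᵥ (F *ᵥ v)) + v ⬝ᵥ v := by
    intro v
    conv_lhs => rw [← heq]
    rw [Matrix.add_mulVec, Matrix.one_mulVec, dotProduct_add]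
    congr 1
    rw [dp_shift F v, Matrix.mulVec_mulVec, Matrix.mulVec_mulVec]
  have hVN : ∀ v : Fin n → ℝ, v ⬝ᵥ v ≤ v ⬝ᵥ (P *ᵥ v) := by
    intro v
    have h0 : 0 ≤ (F *ᵥ v) ⬝ᵥ (P *ᵥ (F *ᵥ v)) := by
      have h := hP.posSemidef.dotProduct_mulVec_nonneg (F *ᵥ v)
      simpa using h
    linarith [hdecomp v]
  have hlmax1 : (1:ℝ) ≤ lmax := by
    have hv : (Pi.single imax 1 : Fin n → ℝ) ⬝ᵥ Pi.single imax 1 = 1 := by simp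
    have h1 := hVN (Pi.single imax 1)
    have h2 := hub (Pi.single imax 1)
    rw [hv] at h1 h2
    linarith
  have hlam0 : 0 ≤ lam := by
    have h : 1 / (2 * lmax) ≤ 1 := by
      rw [div_le_one (by linarith)]; linarith
    rw [hlamdef]; linarith
  have hstep : ∀ s : ℕ, (z (s+1)) ⬝ᵥ (P *ᵥ z (s+1))
      ≤ lam * ((z s) ⬝ᵥ (P *ᵥ z s)) + β * g ^ 2 := by
    intro s
    set u := F *ᵥ z s with hu
    set w := G s with hw
    have hzz : z (s+1) = u + w := hz s
    have hexp : (z (s+1)) ⬝ᵥ (P *ᵥ z (s+1))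
        = (u ⬝ᵥ (P *ᵥ u)) + 2 * (w ⬝ᵥ ((P * F) *ᵥ z s)) + (w ⬝ᵥ (P *ᵥ w)) := by
      rw [hzz, Matrix.mulVec_add, dotProduct_add, add_dotProduct, add_dotProduct]
      have hcross1 : u ⬝ᵥ (P *ᵥ w) = w ⬝ᵥ ((P * F) *ᵥ z s) := by
        rw [dotProduct_comm, dp_shift P w u, hPt, hu, Matrix.mulVec_mulVec]
      have hcross2 : w ⬝ᵥ (P *ᵥ u) = w ⬝ᵥ ((P * F) *ᵥ z s) := by
        rw [hu, Matrix.mulVec_mulVec]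
      rw [hcross1, hcross2]; ring
    have h1 : u ⬝ᵥ (P *ᵥ u) = (z s) ⬝ᵥ (P *ᵥ z s) - (z s) ⬝ᵥ (z s) := by
      have h := hdecomp (z s); rw [hu]; linarith
    have hwg : enormE w ≤ g := hG s
    have hw0 : 0 ≤ enormE w := enorm_nonneg' w
    have ha0 : 0 ≤ enormE (z s) := enorm_nonneg' (z s)
    have hcb : w ⬝ᵥ ((P * F) *ᵥ z s) ≤ g * (sn (P * F) * enormE (z s)) := by
      calc w ⬝ᵥ ((P * F) *ᵥ z s) ≤ enormE w * enormE ((P * F) *ᵥ z s) := dp_le _ _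
        _ ≤ enormE w * (sn (P * F) * enormE (z s)) :=
            mul_le_mul_of_nonneg_left (enorm_mulVec_le _ _) hw0
        _ ≤ g * (sn (P * F) * enormE (z s)) :=
            mul_le_mul_of_nonneg_right hwg (by positivity)
    have hwb : w ⬝ᵥ (P *ᵥ w) ≤ sn P * g ^ 2 := by
      calc w ⬝ᵥ (P *ᵥ w) ≤ enormE w * enormE (P *ᵥ w) := dp_le _ _
        _ ≤ enormE w * (sn P * enormE w) :=
            mul_le_mul_of_nonneg_left (enorm_mulVec_le _ _) hw0
        _ = sn P * (enormE w * enormE w) := by ring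
        _ ≤ sn P * (g * g) := mul_le_mul_of_nonneg_left (mul_le_mul hwg hwg hw0 hg0) hsP
        _ = sn P * g ^ 2 := by ring
    have hNz : (z s) ⬝ᵥ (z s) = enormE (z s) ^ 2 := (enorm_sq_eq _).symm
    have hVa : (z s) ⬝ᵥ (P *ᵥ z s) ≤ lmax * enormE (z s) ^ 2 := by
      have := hub (z s); rw [hNz] at this; exact this
    have hcross : 2 * (w ⬝ᵥ ((P * F) *ᵥ z s))
        ≤ enormE (z s) ^ 2 / 2 + 2 * (sn (P * F)) ^ 2 * g ^ 2 := by
      nlinarith [sq_nonneg (enormE (z s) - 2 * sn (P * F) * g)]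
    have hkey : (z s) ⬝ᵥ (P *ᵥ z s) - enormE (z s) ^ 2 / 2
        ≤ lam * ((z s) ⬝ᵥ (P *ᵥ z s)) := by
      have h2 : (z s) ⬝ᵥ (P *ᵥ z s) / (2 * lmax) ≤ enormE (z s) ^ 2 / 2 := by
        rw [div_le_div_iff₀ (by linarith) (by norm_num)]
        nlinarith
      have h3 : lam * ((z s) ⬝ᵥ (P *ᵥ z s))
          = (z s) ⬝ᵥ (P *ᵥ z s) - (z s) ⬝ᵥ (P *ᵥ z s) / (2 * lmax) := by
        rw [hlamdef]; ring
      linarith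
    rw [hexp, h1, hNz, hβdef]
    linarith
  have hmain : ∀ k : ℕ, (z (t0+k)) ⬝ᵥ (P *ᵥ z (t0+k))
      ≤ lam ^ k * ((z t0) ⬝ᵥ (P *ᵥ z t0))
        + β * g ^ 2 * ∑ l ∈ Finset.range k, lam ^ l := by
    intro k
    induction k with
    | zero =>
      rw [Nat.add_zero, pow_zero, one_mul, Finset.range_zero, Finset.sum_empty, mul_zero,
        add_zero]
    | succ k ih =>
      have h1 := hstep (t0 + k)
      have h2 := mul_le_mul_of_nonneg_left ih hlam0
      have h4 : lam * (lam ^ k * ((z t0) ⬝ᵥ (P *ᵥ z t0))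
            + β * g ^ 2 * ∑ l ∈ Finset.range k, lam ^ l) + β * g ^ 2
          = lam ^ (k+1) * ((z t0) ⬝ᵥ (P *ᵥ z t0))
            + β * g ^ 2 * ∑ l ∈ Finset.range (k+1), lam ^ l := by
        rw [geom_sum_succ, pow_succ]; ring
      have h5 : t0 + (k + 1) = (t0 + k) + 1 := rfl
      rw [h5]
      linarith
  obtain ⟨k, hk⟩ : ∃ k, t = t0 + k := ⟨t - t0, (Nat.add_sub_cancel' ht).symm⟩
  have hkk : t - t0 = k := by omega
  subst hk
  rw [hkk, enorm_sq_eq, enorm_sq_eq]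
  have hVt := hmain k
  have hV0 : (z t0) ⬝ᵥ (P *ᵥ z t0) ≤ lmax * ((z t0) ⬝ᵥ (z t0)) := hub _
  have hlk : 0 ≤ lam ^ k := pow_nonneg hlam0 k
  have hN : lmin * ((z (t0+k)) ⬝ᵥ (z (t0+k))) ≤ (z (t0+k)) ⬝ᵥ (P *ᵥ z (t0+k)) := hlb _
  have hfin : lmin * ((z (t0+k)) ⬝ᵥ (z (t0+k)))
      ≤ lmax * lam ^ k * ((z t0) ⬝ᵥ (z t0))
        + β * g ^ 2 * ∑ l ∈ Finset.range k, lam ^ l := by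
    nlinarith
  rw [show (lmax / lmin) * lam ^ k * ((z t0) ⬝ᵥ (z t0))
        + (β / lmin) * g ^ 2 * ∑ l ∈ Finset.range k, lam ^ l
      = (lmax * lam ^ k * ((z t0) ⬝ᵥ (z t0))
        + β * g ^ 2 * ∑ l ∈ Finset.range k, lam ^ l) / lmin by field_simp]
  rw [le_div_iff₀ hlminpos]
  linarith
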